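/- arXiv:2008.04699 — 3 statements merged into one kernel-verified Lean document; each statement's English description precedes it below -/
import Mathlib

section
/- Let p ≥ 1 be an integer and let X₁,…,X_p be independent integrable random vectors in a finite-dimensional real inner product space, each with the same mean m = E[Xᵢ] and with E‖Xᵢ − m‖² ≤ σ² for some σ ≥ 0. Then E[max_{1≤i≤p} ‖Xᵢ‖] ≤ σ·(1 + √(p − 1)) + ‖m‖. -/
/-!
Pointwise, `‖X i‖ ≤ ‖m‖ + ‖X i - m‖ ≤ ‖m‖ + √(∑ⱼ ‖X j - m‖²)`. Jensen's inequality for the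
concave square root bounds the expectation of the last term by `√(p σ²) = σ √p`, and
`√p ≤ 1 + √(p - 1)`.
-/

open MeasureTheory ProbabilityTheory

namespace Real

lemma sqrt_le_one_add_sqrt_sub_one (x : ℝ) : √x ≤ 1 + √(x - 1) := by
  rcases le_total x 1 with hx | hx
  · linarith [sqrt_le_one.mpr hx, sqrt_nonneg (x - 1)]
  · rw [sqrt_le_left (by positivity)]
    nlinarith [sq_sqrt (sub_nonneg.mpr hx), sqrt_nonneg (x - 1)]

lemma le_sqrt_sum_sq {ι : Type*} [Fintype ι] (y : ι → ℝ) (i : ι) :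
    y i ≤ √(∑ j, y j ^ 2) :=
  (le_abs_self _).trans <| abs_le_sqrt <|
    Finset.single_le_sum (fun j _ => sq_nonneg (y j)) (Finset.mem_univ i)

end Real

namespace MeasureTheory

variable {Ω : Type*} [MeasurableSpace Ω] {μ : Measure Ω} {f : Ω → ℝ}

lemma Integrable.sqrt [IsFiniteMeasure μ] (hf : Integrable f μ) :
    Integrable (fun ω => √(f ω)) μ := by
  have hmeas : AEStronglyMeasurable (fun ω => √(f ω)) μ :=
    Real.continuous_sqrt.comp_aestronglyMeasurable hf.1
  refine ((memLp_two_iff_integrable_sq hmeas).mpr ?_).integrable one_le_two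
  simpa only [Real.sq_sqrt'] using hf.pos_part

lemma integral_sqrt_le_sqrt_integral [IsProbabilityMeasure μ] (hf : Integrable f μ)
    (hf_nonneg : 0 ≤ᵐ[μ] f) : ∫ ω, √(f ω) ∂μ ≤ √(∫ ω, f ω ∂μ) :=
  Real.strictConcaveOn_sqrt.concaveOn.le_map_integral Real.continuous_sqrt.continuousOn
    isClosed_Ici hf_nonneg hf hf.sqrt

end MeasureTheory

theorem integral_iSup_norm_le {ι : Type*} [Fintype ι] {E : Type*} [SeminormedAddCommGroup E]
    {Ω : Type*} [MeasurableSpace Ω] {μ : Measure Ω} [IsProbabilityMeasure μ]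
    (X : ι → Ω → E) (m : E) {σ : ℝ} (hσ : 0 ≤ σ)
    (hint : ∀ i, Integrable (fun ω => ‖X i ω - m‖ ^ 2) μ)
    (hvar : ∀ i, ∫ ω, ‖X i ω - m‖ ^ 2 ∂μ ≤ σ ^ 2) :
    ∫ ω, ⨆ i, ‖X i ω‖ ∂μ ≤ σ * √(Fintype.card ι) + ‖m‖ := by
  set S : Ω → ℝ := fun ω => ∑ i, ‖X i ω - m‖ ^ 2
  have hS : Integrable S μ := integrable_finsetSum _ fun i _ => hint i
  have hpointwise (ω : Ω) : ⨆ i, ‖X i ω‖ ≤ ‖m‖ + √(S ω) :=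
    Real.iSup_le (fun i => calc
        ‖X i ω‖ ≤ ‖X i ω - m‖ + ‖m‖ := norm_le_norm_sub_add _ _
        _ ≤ ‖m‖ + √(S ω) := by
          linarith [Real.le_sqrt_sum_sq (fun j => ‖X j ω - m‖) i])
      (by positivity)
  have hES : ∫ ω, S ω ∂μ ≤ Fintype.card ι * σ ^ 2 := by
    simpa [S, integral_finsetSum _ fun i _ => hint i] using
      Finset.sum_le_sum fun i (_ : i ∈ Finset.univ) => hvar i
  calc ∫ ω, ⨆ i, ‖X i ω‖ ∂μ
      ≤ ∫ ω, ‖m‖ + √(S ω) ∂μ :=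
        integral_mono_of_nonneg (.of_forall fun ω => Real.iSup_nonneg fun i => norm_nonneg _)
          ((integrable_const _).add hS.sqrt) (.of_forall hpointwise)
    _ = ‖m‖ + ∫ ω, √(S ω) ∂μ := by
        rw [integral_add (integrable_const _) hS.sqrt, integral_const, probReal_univ, one_smul]
    _ ≤ ‖m‖ + √(Fintype.card ι * σ ^ 2) := by
        gcongr
        exact (integral_sqrt_le_sqrt_integral hS (.of_forall fun ω => by positivity)).trans
          (Real.sqrt_le_sqrt hES)
    _ = σ * √(Fintype.card ι) + ‖m‖ := by
        rw [Real.sqrt_mul (Nat.cast_nonneg _), Real.sqrt_sq hσ]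
        ring

theorem expected_max_norm_bound_general {E : Type*} [NormedAddCommGroup E]
    {Ω : Type*} [MeasureSpace Ω] [IsProbabilityMeasure (ℙ : Measure Ω)]
    {p : ℕ} (X : Fin p → Ω → E) {m : E}
    {σ : ℝ} (hσ : 0 ≤ σ) (hint2 : ∀ i, Integrable (fun ω => ‖X i ω - m‖ ^ 2))
    (hvar : ∀ i, ∫ ω, ‖X i ω - m‖ ^ 2 ∂(ℙ : MeasureTheory.Measure Ω) ≤ σ ^ 2) :
    ∫ ω, (⨆ i, ‖X i ω‖) ∂(ℙ : MeasureTheory.Measure Ω) ≤ σ * (1 + Real.sqrt ((p : ℝ) - 1)) + ‖m‖ := by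
  refine (integral_iSup_norm_le X m hσ hint2 hvar).trans ?_
  rw [Fintype.card_fin]
  gcongr
  exact Real.sqrt_le_one_add_sqrt_sub_one p

/-- Lemma 2 of the paper: the expected largest norm among `p` i.i.d.-mean random
vectors with common mean `m` and variance bound `σ²` is at most
`σ(1 + √(p−1)) + ‖m‖`. -/
theorem expected_max_norm_bound {E : Type*} [NormedAddCommGroup E]
    [InnerProductSpace ℝ E] [FiniteDimensional ℝ E] [MeasurableSpace E] [BorelSpace E]
    {Ω : Type*} [MeasureSpace Ω] [IsProbabilityMeasure (ℙ : Measure Ω)]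
    {p : ℕ} (hp : 1 ≤ p) (X : Fin p → Ω → E) (hmeas : ∀ i, Measurable (X i))
    (hindep : iIndepFun X ℙ)
    (hint : ∀ i, Integrable (X i)) {m : E} (hm : ∀ i, ∫ ω, X i ω ∂(ℙ : MeasureTheory.Measure Ω) = m)
    {σ : ℝ} (hσ : 0 ≤ σ) (hint2 : ∀ i, Integrable (fun ω => ‖X i ω - m‖ ^ 2))
    (hvar : ∀ i, ∫ ω, ‖X i ω - m‖ ^ 2 ∂(ℙ : MeasureTheory.Measure Ω) ≤ σ ^ 2) :
    ∫ ω, (⨆ i, ‖X i ω‖) ∂(ℙ : MeasureTheory.Measure Ω) ≤ σ * (1 + Real.sqrt ((p : ℝ) - 1)) + ‖m‖ :=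
  expected_max_norm_bound_general X hσ hint2 hvar
end

section
/- Let g₁,…,gₙ be vectors in a real inner product space, let 0 ≤ f < n, and let S, H ⊆ {1,…,n} with |S| = |H| = n − f such that ‖gⱼ‖ ≤ ‖gₖ‖ whenever j ∈ S and k ∉ S. Then ‖Σ_{j∈S} gⱼ‖² ≤ (n − f) · Σ_{j∈H} ‖gⱼ‖². -/
/-!
Every `‖g j‖` with `j ∈ S \ H` is at most every `‖g k‖` with `k ∈ H \ S`, and these two sets
have the same size, so the sum of `‖g j‖ ^ 2` over `S` is at most the one over `H`. Combined with
`‖∑ j ∈ S, g j‖ ^ 2 ≤ #S * ∑ j ∈ S, ‖g j‖ ^ 2` (triangle inequality and Cauchy–Schwarz) this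
gives the bound.
-/

namespace Finset

variable {ι M : Type*} [AddCommMonoid M] [LinearOrder M] {s t : Finset ι} {f : ι → M}

theorem sum_le_sum_of_card_eq_of_forall_le [IsOrderedAddMonoid M] (hst : #s = #t)
    (h : ∀ i ∈ s, ∀ j ∈ t, f i ≤ f j) : ∑ i ∈ s, f i ≤ ∑ j ∈ t, f j := by
  rcases s.eq_empty_or_nonempty with rfl | hs
  · rw [eq_comm, card_empty, card_eq_zero] at hst
    simp [hst]
  obtain ⟨i, hi, hmax⟩ := s.exists_max_image f hs
  calc ∑ i ∈ s, f i ≤ #s • f i := sum_le_card_nsmul _ _ _ hmax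
    _ = #t • f i := by rw [hst]
    _ ≤ ∑ j ∈ t, f j := card_nsmul_le_sum _ _ _ (h i hi)

theorem sum_le_sum_of_card_eq_of_forall_mem_le_notMem [IsOrderedCancelAddMonoid M]
    [DecidableEq ι] (hst : #s = #t) (h : ∀ i ∈ s, ∀ j ∉ s, f i ≤ f j) :
    ∑ i ∈ s, f i ≤ ∑ j ∈ t, f j :=
  sum_sdiff_le_sum_sdiff.1 <| sum_le_sum_of_card_eq_of_forall_le (card_sdiff_comm hst)
    fun i hi j hj ↦ h i (mem_sdiff.1 hi).1 j (mem_sdiff.1 hj).2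

end Finset

open Finset in
theorem norm_sum_sq_le_card_mul_sum_norm_sq {ι E : Type*} [SeminormedAddCommGroup E]
    (s : Finset ι) (v : ι → E) : ‖∑ i ∈ s, v i‖ ^ 2 ≤ #s * ∑ i ∈ s, ‖v i‖ ^ 2 :=
  (pow_le_pow_left₀ (norm_nonneg _) (norm_sum_le _ _) 2).trans sq_sum_le_card_mul_sum_sq

theorem cge_aggregate_sq_norm_le_general {E : Type*} [NormedAddCommGroup E]
    {n f : ℕ} (hfn : f < n) (g : Fin n → E)
    (S H : Finset (Fin n)) (hS : S.card = n - f) (hH : H.card = n - f)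
    (hfilter : ∀ j ∈ S, ∀ k ∉ S, ‖g j‖ ≤ ‖g k‖) :
    ‖∑ j ∈ S, g j‖ ^ 2 ≤ ((n : ℝ) - (f : ℝ)) * ∑ j ∈ H, ‖g j‖ ^ 2 := by
  have hsum : ∑ j ∈ S, ‖g j‖ ^ 2 ≤ ∑ j ∈ H, ‖g j‖ ^ 2 :=
    Finset.sum_le_sum_of_card_eq_of_forall_mem_le_notMem (hS.trans hH.symm)
      fun j hj k hk ↦ pow_le_pow_left₀ (norm_nonneg _) (hfilter j hj k hk) 2
  calc ‖∑ j ∈ S, g j‖ ^ 2 ≤ S.card * ∑ j ∈ S, ‖g j‖ ^ 2 :=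
        norm_sum_sq_le_card_mul_sum_norm_sq S g
    _ ≤ S.card * ∑ j ∈ H, ‖g j‖ ^ 2 := by gcongr
    _ = ((n : ℝ) - (f : ℝ)) * ∑ j ∈ H, ‖g j‖ ^ 2 := by rw [hS, Nat.cast_sub hfn.le]

/-- Eqns. (42)–(44) of Appendix A-C: the squared norm of the aggregate of the `n − f`
gradients retained by the CGE gradient-filter is at most `n − f` times the sum of the
squared norms of the gradients of any set `H` of `n − f` indices. -/
theorem cge_aggregate_sq_norm_le {E : Type*} [NormedAddCommGroup E]
    [InnerProductSpace ℝ E] {n f : ℕ} (hfn : f < n) (g : Fin n → E)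
    (S H : Finset (Fin n)) (hS : S.card = n - f) (hH : H.card = n - f)
    (hfilter : ∀ j ∈ S, ∀ k ∉ S, ‖g j‖ ≤ ‖g k‖) :
    ‖∑ j ∈ S, g j‖ ^ 2 ≤ ((n : ℝ) - (f : ℝ)) * ∑ j ∈ H, ‖g j‖ ^ 2 :=
  cge_aggregate_sq_norm_le_general hfn g S H hS hH hfilter
end

section
/- Let g₁,…,gₙ be vectors in a real inner product space, x a vector in the same space, 0 ≤ f < n, and let S, H ⊆ {1,…,n} with |S| = |H| = n − f such that ‖gⱼ‖ ≤ ‖gₖ‖ whenever j ∈ S and k ∉ S. Then ⟨x, Σ_{j∈S} gⱼ⟩ ≥ Σ_{i ∈ S∩H} ⟨x, gᵢ⟩ − f · ‖x‖ · max_{i∈H} ‖gᵢ‖. -/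
open scoped RealInnerProductSpace

/-- Eqns. (47)–(52) of Appendix A-C: deterministic lower bound on the inner product of
`x` with the aggregate of the gradients retained by the CGE gradient-filter. -/
theorem cge_inner_lower_bound {E : Type*} [NormedAddCommGroup E]
    [InnerProductSpace ℝ E] {n f : ℕ} (hfn : f < n) (g : Fin n → E) (x : E)
    (S H : Finset (Fin n)) (hS : S.card = n - f) (hH : H.card = n - f)
    (hfilter : ∀ j ∈ S, ∀ k ∉ S, ‖g j‖ ≤ ‖g k‖) :
    (∑ i ∈ S ∩ H, ⟪x, g i⟫) - (f : ℝ) * ‖x‖ * (⨆ i ∈ H, ‖g i‖) ≤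
      ⟪x, ∑ j ∈ S, g j⟫ := by
  set M : ℝ := ⨆ i ∈ H, ‖g i‖ with hM
  have hbdd : BddAbove (Set.range fun i => ⨆ _ : i ∈ H, ‖g i‖) :=
    (Set.finite_range _).bddAbove
  have hleM : ∀ i ∈ H, ‖g i‖ ≤ M := by
    intro i hi
    have := le_ciSup hbdd i
    rwa [ciSup_pos hi] at this
  have hHne : H.Nonempty := by
    rw [← Finset.card_pos, hH]; omega
  have hM0 : 0 ≤ M := by
    obtain ⟨i, hi⟩ := hHne
    exact le_trans (norm_nonneg _) (hleM i hi)
  -- every j in S \ H has small norm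
  have hkey : ∀ j ∈ S \ H, -(‖x‖ * M) ≤ ⟪x, g j⟫ := by
    intro j hj
    rw [Finset.mem_sdiff] at hj
    have hHS : (H \ S).Nonempty := by
      rw [Finset.sdiff_nonempty]
      intro hsub
      have : H = S := Finset.eq_of_subset_of_card_le hsub (by rw [hS, hH])
      exact hj.2 (this ▸ hj.1)
    obtain ⟨k, hk⟩ := hHS
    rw [Finset.mem_sdiff] at hk
    have h1 : ‖g j‖ ≤ M := le_trans (hfilter j hj.1 k hk.2) (hleM k hk.1)
    have h2 : |⟪x, g j⟫| ≤ ‖x‖ * ‖g j‖ := abs_real_inner_le_norm x (g j)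
    nlinarith [abs_nonneg (⟪x, g j⟫), neg_abs_le (⟪x, g j⟫), norm_nonneg x]
  -- cardinality bound
  have hcard : ((S \ H).card : ℝ) ≤ (f : ℝ) := by
    have h1 : (S \ H).card + H.card ≤ n := by
      have := Finset.card_le_card (Finset.subset_univ ((S \ H) ∪ H))
      rwa [Finset.card_union_of_disjoint Finset.sdiff_disjoint,
        Finset.card_univ, Fintype.card_fin] at this
    have : (S \ H).card ≤ f := by omega
    exact_mod_cast this
  have hsum : -((f : ℝ) * ‖x‖ * M) ≤ ∑ j ∈ S \ H, ⟪x, g j⟫ := by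
    calc -((f : ℝ) * ‖x‖ * M) ≤ ((S \ H).card : ℝ) * (-(‖x‖ * M)) := by
            rw [mul_neg]
            rw [neg_le_neg_iff]
            calc ((S \ H).card : ℝ) * (‖x‖ * M) ≤ (f : ℝ) * (‖x‖ * M) := by
                  apply mul_le_mul_of_nonneg_right hcard
                  positivity
              _ = (f : ℝ) * ‖x‖ * M := by ring
      _ ≤ ∑ j ∈ S \ H, ⟪x, g j⟫ := by
            have := Finset.card_nsmul_le_sum (S \ H) (fun j => ⟪x, g j⟫) (-(‖x‖ * M))
              (fun j hj => hkey j hj)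
            rwa [nsmul_eq_mul] at this
  have hsplit : ⟪x, ∑ j ∈ S, g j⟫ =
      (∑ i ∈ S ∩ H, ⟪x, g i⟫) + ∑ j ∈ S \ H, ⟪x, g j⟫ := by
    rw [inner_sum, ← Finset.sum_inter_add_sum_sdiff S H fun j => ⟪x, g j⟫]
  linarith
end
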